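/- Let 0 < Y < 2 and define J_Y(λ) = √(λ/(2π)) ∫_0^∞ e^{−λh/2} h^{(Y−1)/2} (1+h)^{−Y/2} dh for λ > 0. Let X be Gamma(Y/2)-distributed, W an independent Gamma(1) (standard exponential) variable, Z an independent Gamma(1/2) variable, and G an independent standard normal variable. Then for every λ > 0: J_Y(λ) = P( G² ≥ λ X/W ) = E[ exp( −(λ/2) · X/Z ) ]. -/

import Mathlib

/-! Both representations come from the Laplace transform of the Gamma law,
`E[exp(-s X)] = (1 + s)^(-Y/2)` for `X ~ Gamma(Y/2)`. Conditioning on `Z` gives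
`E[exp(-(λ/2) X/Z)] = E[(1 + λ/(2Z))^(-Y/2)]`, and the substitution `z = λh/2` in the
`Gamma(1/2)` density turns this into `J_Y(λ)`. For the first representation,
`P(U ≤ W) = E[exp(-U)]` for an exponential `W` independent of `U ≥ 0`, and `G²/2 ~ Gamma(1/2)`;
hence `P(G² ≥ λX/W) = E[exp(-(λ/2) X/(G²/2))]`, the second representation with `Z = G²/2`. -/

open MeasureTheory ProbabilityTheory Real Set

noncomputable def JFun (Y l : ℝ) : ℝ :=
  Real.sqrt (l / (2 * π)) *
    ∫ h in Ioi (0:ℝ), Real.exp (-(l * h / 2)) * h ^ ((Y-1)/2) * (1+h) ^ (-(Y/2))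

lemma gammaMeasure_ae_pos {a r : ℝ} : ∀ᵐ x ∂gammaMeasure a r, 0 < x := by
  rw [gammaMeasure,
    ae_withDensity_iff (f := gammaPDF a r) (measurable_gammaPDFReal a r).ennreal_ofReal]
  filter_upwards [Measure.ae_ne volume 0] with x hx0 hpdf
  exact lt_of_le_of_ne (not_lt.1 fun hneg => hpdf (gammaPDF_of_neg hneg)) hx0.symm

lemma aemeasurable_of_map_eq_gammaMeasure {Ω : Type*} [MeasurableSpace Ω] {μ : Measure Ω}
    {X : Ω → ℝ} {a r : ℝ} (ha : 0 < a) (hr : 0 < r) (hXlaw : μ.map X = gammaMeasure a r) :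
    AEMeasurable X μ :=
  have := isProbabilityMeasure_gammaMeasure ha hr
  .of_map_ne_zero (hXlaw ▸ IsProbabilityMeasure.ne_zero _)

lemma ae_pos_of_map_eq_gammaMeasure {Ω : Type*} [MeasurableSpace Ω] {μ : Measure Ω}
    {X : Ω → ℝ} {a r : ℝ} (hX : AEMeasurable X μ) (hXlaw : μ.map X = gammaMeasure a r) :
    ∀ᵐ ω ∂μ, 0 < X ω :=
  ae_of_ae_map hX (hXlaw ▸ gammaMeasure_ae_pos)

lemma integral_gammaMeasure {a r : ℝ} (ha : 0 < a) (hr : 0 < r) (f : ℝ → ℝ) :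
    ∫ x, f x ∂gammaMeasure a r = ∫ x in Ioi 0, gammaPDFReal a r x * f x := by
  rw [← Measure.restrict_eq_self_of_ae_mem (s := Ioi (0:ℝ)) gammaMeasure_ae_pos, gammaMeasure,
    restrict_withDensity measurableSet_Ioi,
    integral_withDensity_eq_integral_toReal_smul (f := gammaPDF a r)
      (measurable_gammaPDFReal a r).ennreal_ofReal (ae_of_all _ fun _ => ENNReal.ofReal_lt_top)]
  simp only [gammaPDF, ENNReal.toReal_ofReal (gammaPDFReal_nonneg ha hr _), smul_eq_mul]

lemma gammaPDFReal_half_one {x : ℝ} (hx : 0 < x) :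
    gammaPDFReal (1/2) 1 x = exp (-x) / √(π * x) := by
  rw [gammaPDFReal, if_pos hx.le, Gamma_one_half_eq, one_rpow, one_mul,
    show (1:ℝ)/2 - 1 = -(1/2) by norm_num, rpow_neg hx.le, ← sqrt_eq_rpow,
    sqrt_mul pi_pos.le]
  field_simp

lemma integral_exp_neg_mul_gammaMeasure {a r s : ℝ} (ha : 0 < a) (hr : 0 < r) (hs : -r < s) :
    ∫ x, exp (-(s * x)) ∂gammaMeasure a r = (1 + s / r) ^ (-a) := by
  have hrs : 0 < r + s := by linarith
  have hpdf : ∀ x ∈ Ioi (0:ℝ), gammaPDFReal a r x * exp (-(s * x))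
      = r ^ a / Gamma a * (x ^ (a - 1) * exp (-((r + s) * x))) := fun x hx => by
    rw [gammaPDFReal, if_pos (le_of_lt hx), mul_assoc, mul_assoc, ← exp_add]
    ring_nf
  rw [integral_gammaMeasure ha hr, setIntegral_congr_fun measurableSet_Ioi hpdf,
    integral_const_mul, integral_rpow_mul_exp_neg_mul_Ioi ha hrs,
    show 1 + s / r = (r + s) / r by field_simp, rpow_neg (by positivity),
    div_rpow hrs.le hr.le, one_div, inv_rpow hrs.le]
  field_simp [(Gamma_pos_of_pos ha).ne']

lemma expMeasure_Ici {r u : ℝ} (hr : 0 < r) (hu : 0 ≤ u) :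
    expMeasure r (Ici u) = ENNReal.ofReal (exp (-(r * u))) := by
  have := isProbabilityMeasure_expMeasure hr
  have : NullSingletonClass (expMeasure r) := by rw [expMeasure, gammaMeasure]; infer_instance
  have hexp : exp (-(r * u)) ≤ 1 := exp_le_one_iff.2 (neg_nonpos.2 (mul_nonneg hr.le hu))
  rw [← compl_Iio, prob_compl_eq_one_sub measurableSet_Iio, measure_congr Iio_ae_eq_Iic,
    ← ofReal_cdf, cdf_expMeasure_eq hr, if_pos hu, ← ENNReal.ofReal_one,
    ← ENNReal.ofReal_sub _ (sub_nonneg.2 hexp)]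
  ring_nf

lemma image_sq_div_two_Ioi : (fun x : ℝ => x ^ 2 / 2) '' Ioi 0 = Ioi 0 := by
  ext z
  constructor
  · rintro ⟨x, hx : 0 < x, rfl⟩
    show 0 < x ^ 2 / 2
    positivity
  · intro (hz : 0 < z)
    refine ⟨√(2 * z), sqrt_pos.2 (by positivity), ?_⟩
    show √(2 * z) ^ 2 / 2 = z
    rw [sq_sqrt (by positivity)]
    ring

lemma integral_comp_sq_div_two_gaussianReal (f : ℝ → ℝ) :
    ∫ x, f (x ^ 2 / 2) ∂gaussianReal 0 1 = ∫ z, f z ∂gammaMeasure (1/2) 1 := by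
  have hderiv : ∀ x ∈ Ioi (0:ℝ), HasDerivWithinAt (fun x : ℝ => x ^ 2 / 2) x (Ioi 0) x := by
    intro x _
    exact ((hasDerivAt_pow 2 x).div_const 2).hasDerivWithinAt.congr_deriv (by norm_num)
  have hinj : InjOn (fun x : ℝ => x ^ 2 / 2) (Ioi 0) := fun x hx y hy hxy =>
    (sq_eq_sq₀ (le_of_lt hx) (le_of_lt hy)).1 (by simpa using hxy)
  have hdensity : ∀ x ∈ Ioi (0:ℝ), |x| • (gammaPDFReal (1/2) 1 (x ^ 2 / 2) * f (x ^ 2 / 2))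
      = 2 * (gaussianPDFReal 0 1 x * f (x ^ 2 / 2)) := by
    intro x (hx : 0 < x)
    rw [gammaPDFReal_half_one (by positivity), gaussianPDFReal, NNReal.coe_one, mul_one,
      sub_zero, abs_of_pos hx, smul_eq_mul,
      show π * (x ^ 2 / 2) = (x / 2) ^ 2 * (2 * π) by ring, sqrt_mul (by positivity),
      sqrt_sq (by positivity)]
    field_simp
  rw [integral_gaussianReal_eq_integral_smul one_ne_zero,
    integral_gammaMeasure (by norm_num) one_pos, ← image_sq_div_two_Ioi,
    integral_image_eq_integral_abs_deriv_smul measurableSet_Ioi hderiv hinj,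
    setIntegral_congr_fun measurableSet_Ioi hdensity, integral_const_mul]
  simp_rw [smul_eq_mul]
  rw [← integral_comp_abs]
  congr 1 with x
  simp only [gaussianPDFReal, sub_zero, sq_abs]

lemma gaussianReal_map_sq_div_two :
    (gaussianReal 0 1).map (fun x => x ^ 2 / 2) = gammaMeasure (1/2) 1 := by
  have := isProbabilityMeasure_gammaMeasure (a := 1/2) (r := 1) (by norm_num) one_pos
  ext s hs
  rw [← ENNReal.toReal_eq_toReal_iff' (measure_ne_top _ _) (measure_ne_top _ _),
    ← measureReal_def, ← measureReal_def, ← integral_indicator_one hs,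
    ← integral_indicator_one hs,
    integral_map (by fun_prop) (measurable_one.indicator hs).aestronglyMeasurable]
  exact integral_comp_sq_div_two_gaussianReal _

lemma JFun_eq_integral_gammaMeasure {Y l : ℝ} (hl : 0 < l) :
    JFun Y l = ∫ z, (1 + l / 2 / z) ^ (-(Y / 2)) ∂gammaMeasure (1/2) 1 := by
  set c := l / 2 with hc_def
  have hc : 0 < c := by positivity
  have key : ∀ h ∈ Ioi (0:ℝ),
      c * (gammaPDFReal (1/2) 1 (c * h) * (1 + c / (c * h)) ^ (-(Y/2)))
        = √(l / (2 * π)) * (exp (-(l * h / 2)) * h ^ ((Y-1)/2) * (1+h) ^ (-(Y/2))) := by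
    intro h (hh : 0 < h)
    have hsplit : h ^ ((Y-1)/2) = h ^ (Y/2) / √h := by
      rw [sqrt_eq_rpow, ← rpow_sub hh]; ring_nf
    have hfrac : (1 + c / (c * h)) ^ (-(Y/2)) = (1 + h) ^ (-(Y/2)) * h ^ (Y/2) := by
      rw [show 1 + c / (c * h) = (1 + h) / h by field_simp; ring, div_rpow (by positivity) hh.le,
        rpow_neg hh.le, div_inv_eq_mul]
    have hsqrt : √(π * (c * h)) = √(π * c) * √h := by
      rw [← mul_assoc, sqrt_mul (by positivity)]
    have hconst : c / √(π * c) = √(l / (2 * π)) := by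
      rw [div_eq_iff (by positivity), ← sqrt_mul (by positivity),
        show l / (2 * π) * (π * c) = c ^ 2 by rw [hc_def]; field_simp, sqrt_sq hc.le]
    rw [gammaPDFReal_half_one (by positivity), hfrac, hsplit, hsqrt, ← hconst,
      show -(l * h / 2) = -(c * h) by rw [hc_def]; ring]
    field_simp
  rw [integral_gammaMeasure (by norm_num) one_pos, JFun, ← integral_const_mul,
    ← setIntegral_congr_fun measurableSet_Ioi key, integral_const_mul,
    integral_comp_mul_left_Ioi (fun z => gammaPDFReal (1/2) 1 z * (1 + c / z) ^ (-(Y/2))) 0 hc,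
    mul_zero, smul_eq_mul, mul_inv_cancel_left₀ hc.ne']

section

variable {Ω : Type*} [MeasurableSpace Ω] {μ : Measure Ω} [IsFiniteMeasure μ]

lemma ProbabilityTheory.IndepFun.measure_le_eq_ofReal_integral_exp {U W : Ω → ℝ} {r : ℝ}
    (hr : 0 < r) (hU : AEMeasurable U μ) (hW : AEMeasurable W μ) (hUW : IndepFun U W μ)
    (hWlaw : μ.map W = expMeasure r) (hU0 : ∀ᵐ ω ∂μ, 0 ≤ U ω) :
    μ {ω | U ω ≤ W ω} = ENNReal.ofReal (∫ ω, exp (-(r * U ω)) ∂μ) := by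
  have := isProbabilityMeasure_expMeasure hr
  have hle : MeasurableSet {p : ℝ × ℝ | p.1 ≤ p.2} :=
    measurableSet_le measurable_fst measurable_snd
  have hexp : Measurable fun u : ℝ => ENNReal.ofReal (exp (-(r * u))) := by fun_prop
  have hint : Integrable (fun ω => exp (-(r * U ω))) μ := by
    refine .of_bound (by fun_prop) 1 ?_
    filter_upwards [hU0] with ω hω
    rw [norm_of_nonneg (exp_pos _).le, exp_le_one_iff, neg_nonpos]
    positivity
  calc μ {ω | U ω ≤ W ω}
      = ((μ.map U).prod (expMeasure r)) {p | p.1 ≤ p.2} := by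
        rw [← hWlaw, ← (indepFun_iff_map_prod_eq_prod_map_map hU hW).1 hUW,
          Measure.map_apply_of_aemeasurable (hU.prodMk hW) hle]
        rfl
    _ = ∫⁻ u, expMeasure r (Ici u) ∂μ.map U := Measure.prod_apply hle
    _ = ∫⁻ ω, ENNReal.ofReal (exp (-(r * U ω))) ∂μ := by
        rw [← lintegral_map' hexp.aemeasurable hU]
        refine lintegral_congr_ae ?_
        filter_upwards [ae_map_iff hU measurableSet_Ici |>.2 hU0] with u hu
        exact expMeasure_Ici hr hu
    _ = ENNReal.ofReal (∫ ω, exp (-(r * U ω)) ∂μ) :=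
        (ofReal_integral_eq_lintegral_ofReal hint (ae_of_all _ fun _ => (exp_pos _).le)).symm

lemma ProbabilityTheory.IndepFun.integral_comp_eq_integral_integral {α β : Type*}
    [MeasurableSpace α] [MeasurableSpace β] {X : Ω → α} {Z : Ω → β}
    (hX : AEMeasurable X μ) (hZ : AEMeasurable Z μ) (hXZ : IndepFun X Z μ) {f : α × β → ℝ}
    (hf : Integrable f ((μ.map X).prod (μ.map Z))) :
    ∫ ω, f (X ω, Z ω) ∂μ = ∫ z, ∫ x, f (x, z) ∂μ.map X ∂μ.map Z := by
  have hmap := (indepFun_iff_map_prod_eq_prod_map_map hX hZ).1 hXZ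
  rw [← integral_prod_symm f hf, ← hmap,
    integral_map (hX.prodMk hZ) (hmap ▸ hf.aestronglyMeasurable)]

lemma ProbabilityTheory.IndepFun.integral_exp_neg_mul_div_eq_integral_rpow {a r s : ℝ}
    (ha : 0 < a) (hr : 0 < r) (hs : 0 ≤ s) {X Z : Ω → ℝ} (hX : AEMeasurable X μ)
    (hZ : AEMeasurable Z μ) (hXZ : IndepFun X Z μ) (hXlaw : μ.map X = gammaMeasure a r)
    (hZ0 : ∀ᵐ ω ∂μ, 0 < Z ω) :
    ∫ ω, exp (-(s * (X ω / Z ω))) ∂μ = ∫ ω, (1 + s / Z ω / r) ^ (-a) ∂μ := by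
  have := isProbabilityMeasure_gammaMeasure ha hr
  have hZ0' : ∀ᵐ z ∂μ.map Z, 0 < z := (ae_map_iff hZ measurableSet_Ioi).2 hZ0
  have hint :
      Integrable (fun p : ℝ × ℝ => exp (-(s * (p.1 / p.2)))) ((μ.map X).prod (μ.map Z)) := by
    refine .of_bound (by fun_prop) 1 ?_
    rw [hXlaw]
    filter_upwards [Measure.quasiMeasurePreserving_fst.ae gammaMeasure_ae_pos,
      Measure.quasiMeasurePreserving_snd.ae hZ0'] with p hx hz
    rw [norm_of_nonneg (exp_pos _).le, exp_le_one_iff, neg_nonpos]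
    positivity
  rw [hXZ.integral_comp_eq_integral_integral hX hZ hint, hXlaw,
    ← integral_map hZ (f := fun z => (1 + s / z / r) ^ (-a))
      (Measurable.aestronglyMeasurable (by fun_prop))]
  refine integral_congr_ae ?_
  filter_upwards [hZ0'] with z hz
  have hsz : -r < s / z := by linarith [div_nonneg hs hz.le]
  simp_rw [mul_div, mul_div_right_comm s, ← integral_exp_neg_mul_gammaMeasure ha hr hsz]

lemma JFun_eq_integral_exp_neg_mul_div {Y l : ℝ} (hY : 0 < Y) (hl : 0 < l) {X Z : Ω → ℝ}
    (hX : AEMeasurable X μ) (hZ : AEMeasurable Z μ) (hXZ : IndepFun X Z μ)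
    (hXlaw : μ.map X = gammaMeasure (Y/2) 1) (hZlaw : μ.map Z = gammaMeasure (1/2) 1) :
    JFun Y l = ∫ ω, exp (-((l/2) * (X ω / Z ω))) ∂μ := by
  rw [hXZ.integral_exp_neg_mul_div_eq_integral_rpow (by positivity) one_pos (by positivity) hX hZ
    hXlaw (ae_pos_of_map_eq_gammaMeasure hZ hZlaw), JFun_eq_integral_gammaMeasure hl, ← hZlaw,
    integral_map hZ (Measurable.aestronglyMeasurable (by fun_prop))]
  simp_rw [div_one]

lemma ofReal_JFun_eq_measure_le {Y l : ℝ} (hY : 0 < Y) (hl : 0 < l) {X W G : Ω → ℝ}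
    (hX : AEMeasurable X μ) (hW : AEMeasurable W μ) (hG : AEMeasurable G μ)
    (hXG : IndepFun X G μ) (hXGW : IndepFun (fun ω => (X ω, G ω)) W μ)
    (hXlaw : μ.map X = gammaMeasure (Y/2) 1) (hWlaw : μ.map W = expMeasure 1)
    (hGlaw : μ.map G = gaussianReal 0 1) :
    ENNReal.ofReal (JFun Y l) = μ {ω | l * (X ω / W ω) ≤ G ω ^ 2} := by
  have hV : AEMeasurable (fun ω => G ω ^ 2 / 2) μ := by fun_prop
  have hVlaw : μ.map (fun ω => G ω ^ 2 / 2) = gammaMeasure (1/2) 1 := by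
    rw [← gaussianReal_map_sq_div_two, ← hGlaw,
      AEMeasurable.map_map_of_aemeasurable (by fun_prop) hG]
    rfl
  have hXV : IndepFun X (fun ω => G ω ^ 2 / 2) μ := hXG.comp measurable_id
    (show Measurable fun x : ℝ => x ^ 2 / 2 by fun_prop)
  have hUW : IndepFun (fun ω => l / 2 * (X ω / (G ω ^ 2 / 2))) W μ :=
    hXGW.comp (show Measurable fun p : ℝ × ℝ => l / 2 * (p.1 / (p.2 ^ 2 / 2)) by fun_prop)
      measurable_id
  have hV0 := ae_pos_of_map_eq_gammaMeasure hV hVlaw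
  have hU0 : ∀ᵐ ω ∂μ, 0 ≤ l / 2 * (X ω / (G ω ^ 2 / 2)) := by
    filter_upwards [ae_pos_of_map_eq_gammaMeasure hX hXlaw, hV0] with ω hXω hVω
    positivity
  have hevent : μ {ω | l * (X ω / W ω) ≤ G ω ^ 2}
      = μ {ω | l / 2 * (X ω / (G ω ^ 2 / 2)) ≤ W ω} := by
    refine measure_congr (Filter.eventuallyEq_set.2 ?_)
    filter_upwards [ae_pos_of_map_eq_gammaMeasure hW hWlaw, hV0] with ω hWω hVω
    show _ ≤ _ ↔ _ ≤ _
    rw [mul_div_assoc', div_le_iff₀ hWω, mul_div_assoc', div_le_iff₀ hVω]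
    constructor <;> intro h <;> linarith
  rw [hevent, hUW.measure_le_eq_ofReal_integral_exp one_pos (by fun_prop) hW hWlaw hU0,
    JFun_eq_integral_exp_neg_mul_div hY hl hX hV hXV hXlaw hVlaw]
  simp_rw [one_mul]

end

theorem JFun_probabilistic_representation {Ω : Type*} [MeasureSpace Ω]
    [IsProbabilityMeasure (ℙ : Measure Ω)] (Y : ℝ) (hY0 : 0 < Y)
    (X W Z G : Ω → ℝ)
    (hX : Measure.map X ℙ = gammaMeasure (Y/2) 1)
    (hW : Measure.map W ℙ = gammaMeasure 1 1)
    (hZ : Measure.map Z ℙ = gammaMeasure (1/2) 1)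
    (hG : Measure.map G ℙ = gaussianReal 0 1)
    (hindep : iIndepFun ![X, W, Z, G] ℙ) :
    ∀ l : ℝ, 0 < l →
      ENNReal.ofReal (JFun Y l) = ℙ {ω | l * (X ω / W ω) ≤ (G ω)^2} ∧
      JFun Y l = ∫ ω, Real.exp (-((l/2) * (X ω / Z ω))) ∂ℙ := by
  intro l hl
  have hXm := aemeasurable_of_map_eq_gammaMeasure (by positivity) one_pos hX
  have hWm := aemeasurable_of_map_eq_gammaMeasure one_pos one_pos hW
  have hZm := aemeasurable_of_map_eq_gammaMeasure (by norm_num) one_pos hZ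
  have hGm : AEMeasurable G ℙ := .of_map_ne_zero (hG ▸ IsProbabilityMeasure.ne_zero _)
  have hmeas : ∀ i, AEMeasurable (![X, W, Z, G] i) ℙ := by
    intro i; fin_cases i <;> assumption
  exact ⟨ofReal_JFun_eq_measure_le hY0 hl hXm hWm hGm
      (hindep.indepFun (show (0 : Fin 4) ≠ 3 by decide))
      (hindep.indepFun_prodMk₀ hmeas 0 3 1 (by decide) (by decide)) hX hW hG,
    JFun_eq_integral_exp_neg_mul_div hY0 hl hXm hZm
      (hindep.indepFun (show (0 : Fin 4) ≠ 2 by decide)) hX hZ⟩
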